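/- Let n₁, n₂ be positive integers and let f : 𝒰 = ℝ₊² × ℋ_{n₁} × ℋ_{n₂} → ℂ be a C² function that is holomorphic, i.e. ∂f/∂w̄_α := (1/2)(∂f/∂s_α + i ∂f/∂t_α) = 0 and Z̄_{αj} f := ∂f/∂z̄_{αj} − i z_{αj} ∂f/∂s_α = 0 for all j = 1,…,n_α and α = 1,2. Then f satisfies the two heat equations (∂/∂t_α + Δ_α) f = 0 on 𝒰 for α = 1,2, where Δ_α = −(1/(4 n_α)) ∑_{j=1}^{2 n_α} X_{αj}² is the sub-Laplacian acting in the variables g_α = (s_α, z_α). -/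

import Mathlib

noncomputable section

/-- A point of the Heisenberg group ℋ_n : `(s, z) ∈ ℝ × ℂⁿ`. -/
abbrev Heis (n : ℕ) := ℝ × (Fin n → ℂ)

/-- The flat-model ambient space `(t₁, t₂, g₁, g₂)`. -/
abbrev FlatPt (n₁ n₂ : ℕ) := ℝ × ℝ × Heis n₁ × Heis n₂

/-- The left-invariant vector field `X_j = ∂/∂x_j + 2 x_{n+j} ∂/∂s` applied to `f`. -/
def XD {n : ℕ} (j : Fin n) (f : Heis n → ℂ) (g : Heis n) : ℂ :=
  fderiv ℝ f g (2 * (g.2 j).im, Pi.single j 1)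

/-- The left-invariant vector field `X_{n+j} = ∂/∂x_{n+j} − 2 x_j ∂/∂s` applied to `f`. -/
def YD {n : ℕ} (j : Fin n) (f : Heis n → ℂ) (g : Heis n) : ℂ :=
  fderiv ℝ f g (-2 * (g.2 j).re, Pi.single j Complex.I)

/-- The sub-Laplacian `Δ = −(1/(4n)) ∑_{j=1}^{2n} X_j²` applied to `f`. -/
def subLaplacian (n : ℕ) (f : Heis n → ℂ) (g : Heis n) : ℂ :=
  -(1 / (4 * (n : ℂ))) * ∑ j : Fin n, (XD j (XD j f) g + YD j (YD j f) g)

/-- The holomorphy equations on the flat model. -/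
def IsFlatHolomorphicAt (n₁ n₂ : ℕ) (f : FlatPt n₁ n₂ → ℂ) (p : FlatPt n₁ n₂) : Prop :=
  (1/2 : ℂ) * (fderiv ℝ f p (0, 0, (1, 0), 0) + Complex.I * fderiv ℝ f p (1, 0, 0, 0)) = 0 ∧
  (1/2 : ℂ) * (fderiv ℝ f p (0, 0, 0, (1, 0)) + Complex.I * fderiv ℝ f p (0, 1, 0, 0)) = 0 ∧
  (∀ j : Fin n₁,
    (1/2 : ℂ) * (fderiv ℝ f p (0, 0, (0, Pi.single j 1), 0)
        + Complex.I * fderiv ℝ f p (0, 0, (0, Pi.single j Complex.I), 0))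
      - Complex.I * p.2.2.1.2 j * fderiv ℝ f p (0, 0, (1, 0), 0) = 0) ∧
  (∀ j : Fin n₂,
    (1/2 : ℂ) * (fderiv ℝ f p (0, 0, 0, (0, Pi.single j 1))
        + Complex.I * fderiv ℝ f p (0, 0, 0, (0, Pi.single j Complex.I)))
      - Complex.I * p.2.2.2.2 j * fderiv ℝ f p (0, 0, 0, (1, 0)) = 0)

/-! Write `Y_j` for `X_{n+j}`. Since `X_j + i Y_j = 2 Z̄_j`, holomorphy says `(X_j + i Y_j) f = 0`,
so `X_j² + Y_j² = (X_j - i Y_j)(X_j + i Y_j) - i [X_j, Y_j]` acts on `f` as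
`-i [X_j, Y_j] = 4 i ∂/∂s`. Hence `Δ f = -i ∂f/∂s`, while `∂f/∂w̄ = 0` gives `∂f/∂t = i ∂f/∂s`.
The second heat equation is the first one after swapping the two factors. -/

open Complex VectorField Filter Topology

section CauchyRiemann

variable {E : Type*} [NormedAddCommGroup E] [NormedSpace ℝ E]

lemma ContDiffAt.differentiableAt_fderiv_apply {G : Type*} [NormedAddCommGroup G]
    [NormedSpace ℝ G] {F : E → G} {V : E → E} {x : E} (hF : ContDiffAt ℝ 2 F x)
    (hV : DifferentiableAt ℝ V x) :
    DifferentiableAt ℝ (fun y => fderiv ℝ F y (V y)) x :=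
  ((hF.fderiv_right (m := 1) (by norm_num)).differentiableAt (by simp)).clm_apply hV

theorem fderiv_along_sq_add_sq_of_cauchyRiemann {F : E → ℂ} {V W : E → E} {x : E}
    (hF : ContDiffAt ℝ 2 F x) (hV : DifferentiableAt ℝ V x) (hW : DifferentiableAt ℝ W x)
    (hCR : ∀ᶠ y in 𝓝 x, fderiv ℝ F y (V y) + I * fderiv ℝ F y (W y) = 0) :
    fderiv ℝ (fun y => fderiv ℝ F y (V y)) x (V x)
        + fderiv ℝ (fun y => fderiv ℝ F y (W y)) x (W x)
      = -I * fderiv ℝ F x (lieBracket ℝ V W x) := by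
  have hDV := hF.differentiableAt_fderiv_apply hV
  have hDW := hF.differentiableAt_fderiv_apply hW
  have hderiv_zero : fderiv ℝ (fun y => fderiv ℝ F y (V y)) x
      + I • fderiv ℝ (fun y => fderiv ℝ F y (W y)) x = 0 :=
    (hDV.hasFDerivAt.add (hDW.hasFDerivAt.const_mul I)).unique
      ((hasFDerivAt_const (0 : ℂ) x).congr_of_eventuallyEq hCR)
  have hV' := DFunLike.congr_fun hderiv_zero (V x)
  have hW' := DFunLike.congr_fun hderiv_zero (W x)
  simp only [add_apply, smul_apply, smul_eq_mul, zero_apply] at hV' hW'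
  have hcomm := fderiv_apply_lieBracket hF (by simp) hW hV
  linear_combination
    hV' - I * hW' + I * hcomm + fderiv ℝ (fun y => fderiv ℝ F y (W y)) x (W x) * I_sq

end CauchyRiemann

section Heisenberg

variable {n : ℕ}

def heisX (j : Fin n) (g : Heis n) : Heis n := (2 * (g.2 j).im, Pi.single j 1)

def heisY (j : Fin n) (g : Heis n) : Heis n := (-2 * (g.2 j).re, Pi.single j I)

def heisCoord (j : Fin n) : Heis n →L[ℝ] ℂ :=
  (ContinuousLinearMap.proj j).comp (ContinuousLinearMap.snd ℝ ℝ (Fin n → ℂ))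

lemma hasFDerivAt_heisX (j : Fin n) (g : Heis n) :
    HasFDerivAt (heisX j) (((2 : ℝ) • imCLM.comp (heisCoord j)).prod 0) g :=
  (((2 : ℝ) • imCLM.comp (heisCoord j)).hasFDerivAt).prodMk (hasFDerivAt_const _ g)

lemma hasFDerivAt_heisY (j : Fin n) (g : Heis n) :
    HasFDerivAt (heisY j) (((-2 : ℝ) • reCLM.comp (heisCoord j)).prod 0) g :=
  (((-2 : ℝ) • reCLM.comp (heisCoord j)).hasFDerivAt).prodMk (hasFDerivAt_const _ g)

lemma lieBracket_heisX_heisY (j : Fin n) (g : Heis n) :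
    lieBracket ℝ (heisX j) (heisY j) g = (-4, 0) := by
  simp [lieBracket, (hasFDerivAt_heisX j g).fderiv, (hasFDerivAt_heisY j g).fderiv, heisX,
    heisY, heisCoord]
  norm_num

theorem XD_XD_add_YD_YD_of_cauchyRiemann {F : Heis n → ℂ} {g : Heis n} (j : Fin n)
    (hF : ContDiffAt ℝ 2 F g) (hCR : ∀ᶠ h in 𝓝 g, XD j F h + I * YD j F h = 0) :
    XD j (XD j F) g + YD j (YD j F) g = 4 * I * fderiv ℝ F g (1, 0) := by
  have key : XD j (XD j F) g + YD j (YD j F) g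
      = -I * fderiv ℝ F g (lieBracket ℝ (heisX j) (heisY j) g) :=
    fderiv_along_sq_add_sq_of_cauchyRiemann hF
      (hasFDerivAt_heisX j g).differentiableAt (hasFDerivAt_heisY j g).differentiableAt hCR
  have hbracket : lieBracket ℝ (heisX j) (heisY j) g = (-4 : ℝ) • (1, 0) := by
    rw [lieBracket_heisX_heisY]; simp
  rw [hbracket, map_smul, real_smul] at key
  push_cast at key
  linear_combination key

theorem subLaplacian_eq_of_cauchyRiemann (hn : 0 < n) {F : Heis n → ℂ} {g : Heis n}
    (hF : ContDiffAt ℝ 2 F g) (hCR : ∀ j, ∀ᶠ h in 𝓝 g, XD j F h + I * YD j F h = 0) :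
    subLaplacian n F g = -I * fderiv ℝ F g (1, 0) := by
  have hn' : (n : ℂ) ≠ 0 := Nat.cast_ne_zero.mpr hn.ne'
  rw [subLaplacian, Finset.sum_congr rfl fun j _ => XD_XD_add_YD_YD_of_cauchyRiemann j hF (hCR j),
    Finset.sum_const, Finset.card_univ, Fintype.card_fin, nsmul_eq_mul]
  field_simp

end Heisenberg

section FlatModel

variable {n₁ n₂ : ℕ}

lemma isOpen_flatDomain : IsOpen {p : FlatPt n₁ n₂ | 0 < p.1 ∧ 0 < p.2.1} :=
  (isOpen_lt continuous_const continuous_fst).inter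
    (isOpen_lt continuous_const (continuous_fst.comp continuous_snd))

lemma fderiv_slice_fst_apply {f : FlatPt n₁ n₂ → ℂ} {a b : ℝ} {c : Heis n₂} {h : Heis n₁}
    (hf : DifferentiableAt ℝ f (a, b, h, c)) (v : Heis n₁) :
    fderiv ℝ (fun g => f (a, b, g, c)) h v = fderiv ℝ f (a, b, h, c) (0, 0, v, 0) := by
  have hslice : HasFDerivAt (fun g : Heis n₁ => ((a, b, g, c) : FlatPt n₁ n₂))
      ((0 : Heis n₁ →L[ℝ] ℝ).prod ((0 : Heis n₁ →L[ℝ] ℝ).prod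
        ((ContinuousLinearMap.id ℝ _).prod 0))) h :=
    HasFDerivAt.prodMk (hasFDerivAt_const a h) (HasFDerivAt.prodMk (hasFDerivAt_const b h)
      (HasFDerivAt.prodMk (hasFDerivAt_id h) (hasFDerivAt_const c h)))
  rw [HasFDerivAt.fderiv (f := fun g => f (a, b, g, c)) (hf.hasFDerivAt.comp h hslice)]
  rfl

lemma XD_add_I_mul_YD_slice_fst {f : FlatPt n₁ n₂ → ℂ} {a b : ℝ} {c : Heis n₂} {h : Heis n₁}
    (hf : DifferentiableAt ℝ f (a, b, h, c)) (hholo : IsFlatHolomorphicAt n₁ n₂ f (a, b, h, c))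
    (j : Fin n₁) :
    XD j (fun g => f (a, b, g, c)) h + I * YD j (fun g => f (a, b, g, c)) h = 0 := by
  rw [XD, YD, fderiv_slice_fst_apply hf, fderiv_slice_fst_apply hf]
  set D := fderiv ℝ f (a, b, h, c)
  have hsplit : ∀ (r : ℝ) (w : Fin n₁ → ℂ),
      D (0, 0, (r, w), 0) = r * D (0, 0, (1, 0), 0) + D (0, 0, (0, w), 0) := by
    intro r w
    rw [← real_smul, ← map_smul, ← map_add]
    congr 1
    simp
  rw [hsplit _ (Pi.single j 1), hsplit _ (Pi.single j I)]
  have hZ := hholo.2.2.1 j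
  push_cast
  linear_combination 2 * hZ - 2 * I * D (0, 0, (1, 0), 0) * re_add_im (h.2 j)
    + 2 * ((h.2 j).im : ℂ) * D (0, 0, (1, 0), 0) * I_sq

theorem heat_equation_fst (hn₁ : 0 < n₁) {f : FlatPt n₁ n₂ → ℂ}
    (hf : ContDiffOn ℝ 2 f {p : FlatPt n₁ n₂ | 0 < p.1 ∧ 0 < p.2.1})
    (hholo : ∀ p : FlatPt n₁ n₂, 0 < p.1 → 0 < p.2.1 → IsFlatHolomorphicAt n₁ n₂ f p)
    {p : FlatPt n₁ n₂} (ht₁ : 0 < p.1) (ht₂ : 0 < p.2.1) :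
    fderiv ℝ f p (1, 0, 0, 0) + subLaplacian n₁ (fun g => f (p.1, p.2.1, g, p.2.2.2)) p.2.2.1
      = 0 := by
  have hf' : ∀ h : Heis n₁, ContDiffAt ℝ 2 f (p.1, p.2.1, h, p.2.2.2) := fun h =>
    hf.contDiffAt (isOpen_flatDomain.mem_nhds ⟨ht₁, ht₂⟩)
  have hdiff : ∀ h : Heis n₁, DifferentiableAt ℝ f (p.1, p.2.1, h, p.2.2.2) := fun h =>
    (hf' h).differentiableAt (by norm_num)
  have hslice : ContDiffAt ℝ 2 (fun g => f (p.1, p.2.1, g, p.2.2.2)) p.2.2.1 :=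
    (hf' p.2.2.1).comp p.2.2.1 (by fun_prop)
  rw [subLaplacian_eq_of_cauchyRiemann hn₁ hslice fun j => Eventually.of_forall fun h =>
    XD_add_I_mul_YD_slice_fst (hdiff h) (hholo _ ht₁ ht₂) j, fderiv_slice_fst_apply (hdiff _)]
  linear_combination (-2 * I) * (hholo p ht₁ ht₂).1 + fderiv ℝ f p (1, 0, 0, 0) * I_sq

def flatSwap (n₁ n₂ : ℕ) : FlatPt n₁ n₂ ≃L[ℝ] FlatPt n₂ n₁ where
  toFun p := (p.2.1, p.1, p.2.2.2, p.2.2.1)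
  invFun p := (p.2.1, p.1, p.2.2.2, p.2.2.1)
  map_add' _ _ := rfl
  map_smul' _ _ := rfl
  left_inv _ := rfl
  right_inv _ := rfl
  continuous_toFun := by fun_prop
  continuous_invFun := by fun_prop

lemma IsFlatHolomorphicAt.comp_flatSwap {f : FlatPt n₁ n₂ → ℂ} {p : FlatPt n₂ n₁}
    (hholo : IsFlatHolomorphicAt n₁ n₂ f (flatSwap n₂ n₁ p)) :
    IsFlatHolomorphicAt n₂ n₁ (f ∘ flatSwap n₂ n₁) p := by
  obtain ⟨hw₁, hw₂, hz₁, hz₂⟩ := hholo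
  simp only [IsFlatHolomorphicAt, ContinuousLinearEquiv.comp_right_fderiv,
    ContinuousLinearMap.comp_apply]
  exact ⟨hw₂, hw₁, hz₂, hz₁⟩

theorem heat_equation_snd (hn₂ : 0 < n₂) {f : FlatPt n₁ n₂ → ℂ}
    (hf : ContDiffOn ℝ 2 f {p : FlatPt n₁ n₂ | 0 < p.1 ∧ 0 < p.2.1})
    (hholo : ∀ p : FlatPt n₁ n₂, 0 < p.1 → 0 < p.2.1 → IsFlatHolomorphicAt n₁ n₂ f p)
    {p : FlatPt n₁ n₂} (ht₁ : 0 < p.1) (ht₂ : 0 < p.2.1) :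
    fderiv ℝ f p (0, 1, 0, 0) + subLaplacian n₂ (fun g => f (p.1, p.2.1, p.2.2.1, g)) p.2.2.2
      = 0 := by
  have hf' : ContDiffOn ℝ 2 (f ∘ flatSwap n₂ n₁) {q : FlatPt n₂ n₁ | 0 < q.1 ∧ 0 < q.2.1} :=
    (hf.comp_continuousLinearMap (flatSwap n₂ n₁ : FlatPt n₂ n₁ →L[ℝ] FlatPt n₁ n₂)).mono
      fun q hq => ⟨hq.2, hq.1⟩
  have := heat_equation_fst hn₂ hf'
    (fun q hq₁ hq₂ => (hholo _ hq₂ hq₁).comp_flatSwap) (p := flatSwap n₁ n₂ p) ht₂ ht₁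
  rwa [ContinuousLinearEquiv.comp_right_fderiv] at this

end FlatModel

theorem holomorphic_satisfies_heat_equations (n₁ n₂ : ℕ) (hn₁ : 0 < n₁) (hn₂ : 0 < n₂)
    (f : FlatPt n₁ n₂ → ℂ)
    (hf : ContDiffOn ℝ 2 f {p : FlatPt n₁ n₂ | 0 < p.1 ∧ 0 < p.2.1})
    (hholo : ∀ p : FlatPt n₁ n₂, 0 < p.1 → 0 < p.2.1 → IsFlatHolomorphicAt n₁ n₂ f p) :
    ∀ p : FlatPt n₁ n₂, 0 < p.1 → 0 < p.2.1 →
      (fderiv ℝ f p (1, 0, 0, 0)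
        + subLaplacian n₁ (fun g => f (p.1, p.2.1, g, p.2.2.2)) p.2.2.1 = 0) ∧
      (fderiv ℝ f p (0, 1, 0, 0)
        + subLaplacian n₂ (fun g => f (p.1, p.2.1, p.2.2.1, g)) p.2.2.2 = 0) :=
  fun _ ht₁ ht₂ =>
    ⟨heat_equation_fst hn₁ hf hholo ht₁ ht₂, heat_equation_snd hn₂ hf hholo ht₁ ht₂⟩
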